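/- arXiv:1912.04085 — 6 statements merged into one kernel-verified Lean document; each statement's English description precedes it below -/
import Mathlib

section
/- Let B ∈ ℝ^{m×p}, C ∈ ℝ^{n×p} with m ≥ n, set A := B Cᵀ ∈ ℝ^{m×n}, and let A = W H be a polar decomposition of A (W ∈ V(n,m) orthonormal, H symmetric positive semidefinite). Then for every orthonormal matrix Q ∈ V(n,m), ‖B − Q C‖_F² − ‖B − W C‖_F² = ‖W √H − Q √H‖_F². -/
open Matrix
/-- The square root of a positive semidefinite matrix, as `Matrix.PosSemidef.sqrt` was defined in
the older Mathlib (it has since been removed). -/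
noncomputable def Matrix.PosSemidef.sqrt {n : Type*} [Fintype n] [DecidableEq n]
    {A : Matrix n n ℝ} (hA : A.PosSemidef) : Matrix n n ℝ :=
  hA.1.eigenvectorUnitary.1 * diagonal ((↑) ∘ (√·) ∘ hA.1.eigenvalues) *
    (star hA.1.eigenvectorUnitary : Matrix n n ℝ)

/-!
Expanding squares, `‖B - X C‖_F² = ‖B‖_F² + ‖C‖_F² - 2 tr (Xᵀ B Cᵀ)` for every `X` with
orthonormal columns. With `B Cᵀ = W H` the left-hand side of the theorem is therefore
`2 tr (Wᵀ W H) - 2 tr (Qᵀ W H) = 2 tr H - 2 tr (Qᵀ W H)`, and the same expansion applied to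
`‖W √H - Q √H‖_F²` (with `B := W √H`, `C := √H`, `X := Q`) gives `tr H + tr H - 2 tr (Qᵀ W H)`.
-/

namespace Matrix.PosSemidef

variable {n : Type*} [Fintype n] [DecidableEq n] {A : Matrix n n ℝ}

lemma sqrt_mul_self (hA : A.PosSemidef) : hA.sqrt * hA.sqrt = A := by
  have hU : (star hA.1.eigenvectorUnitary : Matrix n n ℝ) * hA.1.eigenvectorUnitary.1 = 1 :=
    Unitary.star_mul_self_of_mem hA.1.eigenvectorUnitary.2
  conv_rhs => rw [hA.1.spectral_theorem, Unitary.conjStarAlgAut_apply]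
  unfold Matrix.PosSemidef.sqrt
  simp only [Matrix.mul_assoc]
  congr 1
  rw [← Matrix.mul_assoc _ hA.1.eigenvectorUnitary.1, hU, Matrix.one_mul, ← Matrix.mul_assoc,
    diagonal_mul_diagonal]
  congr 2
  funext i
  simp [Real.mul_self_sqrt (hA.eigenvalues_nonneg i)]

lemma transpose_sqrt (hA : A.PosSemidef) : hA.sqrtᵀ = hA.sqrt := by
  rw [← conjTranspose_eq_transpose_of_trivial]
  simp only [Matrix.PosSemidef.sqrt, conjTranspose_mul, star_eq_conjTranspose,
    conjTranspose_conjTranspose, diagonal_conjTranspose, star_trivial, Matrix.mul_assoc]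

end Matrix.PosSemidef

namespace Matrix

variable {R : Type*} [CommRing R] {l m n : Type*} [Fintype l] [Fintype m] [Fintype n]

lemma sum_sum_sq_eq_trace_transpose_mul_self (M : Matrix m n R) :
    ∑ i, ∑ j, M i j ^ 2 = trace (Mᵀ * M) := by
  rw [Finset.sum_comm]
  simp [trace, mul_apply, sq]

variable [DecidableEq n] {X : Matrix m n R}

lemma trace_transpose_mul_self_isometry_mul (hX : Xᵀ * X = 1) (C : Matrix n l R) :
    trace ((X * C)ᵀ * (X * C)) = trace (Cᵀ * C) := by
  rw [transpose_mul, Matrix.mul_assoc, ← Matrix.mul_assoc Xᵀ, hX, Matrix.one_mul]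

lemma trace_transpose_mul_self_sub_isometry_mul (hX : Xᵀ * X = 1) (B : Matrix m l R)
    (C : Matrix n l R) :
    trace ((B - X * C)ᵀ * (B - X * C)) =
      trace (Bᵀ * B) + trace (Cᵀ * C) - 2 * trace (Xᵀ * (B * Cᵀ)) := by
  have hXB : trace ((X * C)ᵀ * B) = trace (Xᵀ * (B * Cᵀ)) := by
    rw [transpose_mul, trace_mul_comm, ← Matrix.mul_assoc, trace_mul_comm]
  have hBX : trace (Bᵀ * (X * C)) = trace (Xᵀ * (B * Cᵀ)) := by
    rw [← trace_transpose, transpose_mul, transpose_transpose, hXB]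
  simp only [transpose_sub, Matrix.sub_mul, Matrix.mul_sub, trace_sub,
    trace_transpose_mul_self_isometry_mul hX, hXB, hBX]
  ring

end Matrix

theorem stmt0_general {m n p : ℕ}
    (B : Matrix (Fin m) (Fin p) ℝ) (C : Matrix (Fin n) (Fin p) ℝ)
    (W : Matrix (Fin m) (Fin n) ℝ) (H : Matrix (Fin n) (Fin n) ℝ)
    (hW : Wᵀ * W = 1) (hH : H.PosSemidef) (hpolar : B * Cᵀ = W * H)
    (Q : Matrix (Fin m) (Fin n) ℝ) (hQ : Qᵀ * Q = 1) :
    (∑ i, ∑ j, (B i j - (Q * C) i j) ^ 2) - (∑ i, ∑ j, (B i j - (W * C) i j) ^ 2)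
      = ∑ i, ∑ j, ((W * hH.sqrt) i j - (Q * hH.sqrt) i j) ^ 2 := by
  set S := hH.sqrt
  have hSt : Sᵀ = S := hH.transpose_sqrt
  have hSS : S * S = H := hH.sqrt_mul_self
  have hWS : trace ((W * S)ᵀ * (W * S)) = trace H := by
    rw [trace_transpose_mul_self_isometry_mul hW, hSt, hSS]
  simp only [← Matrix.sub_apply, sum_sum_sq_eq_trace_transpose_mul_self,
    trace_transpose_mul_self_sub_isometry_mul hQ, trace_transpose_mul_self_sub_isometry_mul hW,
    hpolar, hWS, hSt, hSS, Matrix.mul_assoc]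
  rw [← Matrix.mul_assoc Wᵀ, hW, Matrix.one_mul]
  ring

/-- Error reformulation for polar decomposition:
`‖B − QC‖_F² − ‖B − WC‖_F² = ‖W√H − Q√H‖_F²` for any orthonormal `Q`. -/
theorem stmt0 {m n p : ℕ} (hmn : n ≤ m)
    (B : Matrix (Fin m) (Fin p) ℝ) (C : Matrix (Fin n) (Fin p) ℝ)
    (W : Matrix (Fin m) (Fin n) ℝ) (H : Matrix (Fin n) (Fin n) ℝ)
    (hW : Wᵀ * W = 1) (hH : H.PosSemidef) (hpolar : B * Cᵀ = W * H)
    (Q : Matrix (Fin m) (Fin n) ℝ) (hQ : Qᵀ * Q = 1) :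
    (∑ i, ∑ j, (B i j - (Q * C) i j) ^ 2) - (∑ i, ∑ j, (B i j - (W * C) i j) ^ 2)
      = ∑ i, ∑ j, ((W * hH.sqrt) i j - (Q * hH.sqrt) i j) ^ 2 :=
  stmt0_general B C W H hW hH hpolar Q hQ
end

section
/- Let B ∈ ℝ^{m×p}, C ∈ ℝ^{n×p} with m ≥ n, set A := B Cᵀ, and assume A has full rank n with polar decomposition A = W H. Then for every orthonormal matrix Q ∈ V(n,m), ‖B − Q C‖_F² − ‖B − W C‖_F² ≥ σ_min(A) · ‖W − Q‖_F², where σ_min(A) is the smallest singular value of A. -/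
/-!
For `Uᵀ U = 1` one has `‖B - U C‖_F² = ‖B‖_F² + ‖C‖_F² - 2 tr (Uᵀ B Cᵀ)`, so with `B Cᵀ = W H`
the excess of `Q` over `W` is `2 tr H - 2 tr (Qᵀ W H) = tr (H (W - Q)ᵀ (W - Q))`.
Since `H² = Aᵀ A`, the spectrum of `H` lies in `[σ_min(A), ∞)`, i.e. `H - σ_min(A) • 1 ⪰ 0`,
and the trace of a product of two positive semidefinite matrices is nonnegative.
-/

open Matrix
open scoped ComplexOrder

namespace Matrix

variable {m n p 𝕜 : Type*} [Fintype m] [Fintype n] [Fintype p] [RCLike 𝕜]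

open scoped MatrixOrder in
theorem PosSemidef.trace_mul_nonneg {P K : Matrix n n 𝕜} (hP : P.PosSemidef)
    (hK : K.PosSemidef) : 0 ≤ (P * K).trace := by
  classical
  obtain ⟨S, hS, rfl⟩ : ∃ S : Matrix n n 𝕜, S.PosSemidef ∧ P = S * S :=
    ⟨CFC.sqrt P, (CFC.sqrt_nonneg P).posSemidef, (CFC.sqrt_mul_sqrt_self P hP.nonneg).symm⟩
  rw [Matrix.mul_assoc, trace_mul_comm, Matrix.mul_assoc]
  simpa [hS.1.eq, Matrix.mul_assoc] using (hK.mul_mul_conjTranspose_same S).trace_nonneg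

open scoped MatrixOrder in
theorem IsHermitian.posSemidef_sub_smul_one [DecidableEq n] {A : Matrix n n 𝕜}
    (hA : A.IsHermitian) {c : ℝ} (hc : ∀ x ∈ spectrum ℝ A, c ≤ x) : (A - c • 1).PosSemidef := by
  have := (algebraMap_le_iff_le_spectrum (r := c) (a := A) hA.isSelfAdjoint).2 hc
  rwa [Algebra.algebraMap_eq_smul_one] at this

theorem PosSemidef.posSemidef_sub_sqrt_smul_one [DecidableEq n] {H : Matrix n n 𝕜}
    (hH : H.PosSemidef) {c : ℝ} (hc : ∀ y ∈ spectrum ℝ (H * H), c ≤ y) :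
    (H - √c • 1).PosSemidef := by
  refine hH.1.posSemidef_sub_smul_one fun x hx => ?_
  have hx0 : 0 ≤ x := by
    obtain ⟨i, rfl⟩ := hH.1.spectrum_real_eq_range_eigenvalues ▸ hx
    exact hH.eigenvalues_nonneg i
  calc √c ≤ √(x ^ 2) := Real.sqrt_le_sqrt (hc _ (sq H ▸ spectrum.pow_mem_pow H 2 hx))
    _ = x := Real.sqrt_sq hx0

theorem le_trace_mul_of_posSemidef_sub_smul_one [DecidableEq n] {H K : Matrix n n ℝ} {s : ℝ}
    (hH : (H - s • 1).PosSemidef) (hK : K.PosSemidef) : s * K.trace ≤ (H * K).trace := by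
  have := hH.trace_mul_nonneg hK
  rw [Matrix.sub_mul, trace_sub, smul_mul, Matrix.one_mul, trace_smul, smul_eq_mul] at this
  linarith

theorem sum_sq_eq_trace_transpose_mul (X : Matrix m n ℝ) :
    ∑ i, ∑ j, X i j ^ 2 = (Xᵀ * X).trace := by
  rw [trace, Finset.sum_comm]
  simp [mul_apply, sq]

theorem trace_transpose_mul_self_sub_mul_of_orthonormal [DecidableEq n] (B : Matrix m p ℝ)
    (C : Matrix n p ℝ) {U : Matrix m n ℝ} (hU : Uᵀ * U = 1) :
    ((B - U * C)ᵀ * (B - U * C)).trace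
      = (Bᵀ * B).trace + (Cᵀ * C).trace - 2 * (Uᵀ * (B * Cᵀ)).trace := by
  have hC : (U * C)ᵀ * (U * C) = Cᵀ * C := by
    rw [transpose_mul, Matrix.mul_assoc, ← Matrix.mul_assoc Uᵀ, hU, Matrix.one_mul]
  have hcross : (Bᵀ * (U * C)).trace = (Uᵀ * (B * Cᵀ)).trace := by
    rw [trace_mul_comm, Matrix.mul_assoc, trace_mul_comm, ← trace_transpose, transpose_mul,
      transpose_mul, transpose_transpose]
  have hcross' : ((U * C)ᵀ * B).trace = (Uᵀ * (B * Cᵀ)).trace := by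
    rw [← trace_transpose, transpose_mul, transpose_transpose, hcross]
  rw [transpose_sub, Matrix.sub_mul, Matrix.mul_sub, Matrix.mul_sub, hC, trace_sub, trace_sub,
    trace_sub, hcross, hcross']
  ring

theorem trace_sub_trace_eq_trace_mul_of_polar [DecidableEq n] {B : Matrix m p ℝ}
    {C : Matrix n p ℝ} {W Q : Matrix m n ℝ} {H : Matrix n n ℝ} (hW : Wᵀ * W = 1)
    (hQ : Qᵀ * Q = 1) (hH : Hᵀ = H) (hpolar : B * Cᵀ = W * H) :
    ((B - Q * C)ᵀ * (B - Q * C)).trace - ((B - W * C)ᵀ * (B - W * C)).trace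
      = (H * ((W - Q)ᵀ * (W - Q))).trace := by
  have hWQ : (H * (Wᵀ * Q)).trace = (Qᵀ * (W * H)).trace := by
    rw [← trace_transpose, transpose_mul, transpose_mul, hH, transpose_transpose,
      Matrix.mul_assoc]
  have hQW : (H * (Qᵀ * W)).trace = (Qᵀ * (W * H)).trace := by
    rw [trace_mul_comm, Matrix.mul_assoc]
  have hK : (W - Q)ᵀ * (W - Q) = 1 + 1 - Wᵀ * Q - Qᵀ * W := by
    rw [transpose_sub, Matrix.sub_mul, Matrix.mul_sub, Matrix.mul_sub, hW, hQ]
    abel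
  rw [trace_transpose_mul_self_sub_mul_of_orthonormal B C hQ,
    trace_transpose_mul_self_sub_mul_of_orthonormal B C hW, hpolar, ← Matrix.mul_assoc Wᵀ, hW,
    Matrix.one_mul, hK, Matrix.mul_sub, Matrix.mul_sub, Matrix.mul_add, Matrix.mul_one,
    trace_sub, trace_sub, trace_add, hWQ, hQW]
  ring

end Matrix

theorem stmt1_general {m n p : ℕ}
    (B : Matrix (Fin m) (Fin p) ℝ) (C : Matrix (Fin n) (Fin p) ℝ)
    (W : Matrix (Fin m) (Fin n) ℝ) (H : Matrix (Fin n) (Fin n) ℝ)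
    (hW : Wᵀ * W = 1) (hH : H.PosSemidef) (hpolar : B * Cᵀ = W * H)
    (hAA : ((B * Cᵀ)ᵀ * (B * Cᵀ)).IsHermitian)
    (Q : Matrix (Fin m) (Fin n) ℝ) (hQ : Qᵀ * Q = 1) :
    (∑ i, ∑ j, (B i j - (Q * C) i j) ^ 2) - (∑ i, ∑ j, (B i j - (W * C) i j) ^ 2)
      ≥ Real.sqrt (⨅ i, hAA.eigenvalues i) * ∑ i, ∑ j, (W i j - Q i j) ^ 2 := by
  have hHsymm : Hᵀ = H := hH.1
  have hAA_eq : (B * Cᵀ)ᵀ * (B * Cᵀ) = H * H := by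
    rw [hpolar, transpose_mul, hHsymm, Matrix.mul_assoc, ← Matrix.mul_assoc Wᵀ, hW,
      Matrix.one_mul]
  have hspec : ∀ y ∈ spectrum ℝ (H * H), ⨅ i, hAA.eigenvalues i ≤ y := by
    rw [← hAA_eq, hAA.spectrum_real_eq_range_eigenvalues]
    rintro _ ⟨j, rfl⟩
    exact ciInf_le (Finite.bddBelow_range _) j
  simp only [← Matrix.sub_apply, sum_sq_eq_trace_transpose_mul]
  rw [ge_iff_le, trace_sub_trace_eq_trace_mul_of_polar hW hQ hHsymm hpolar]
  exact le_trace_mul_of_posSemidef_sub_smul_one (hH.posSemidef_sub_sqrt_smul_one hspec)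
    (posSemidef_conjTranspose_mul_self _)

/-- Global error bound in Frobenius norm: if `A = BCᵀ` is of full rank `n` with polar
decomposition `A = WH`, then for any orthonormal `Q`,
`‖B − QC‖_F² − ‖B − WC‖_F² ≥ σ_min(A)·‖W − Q‖_F²`, where the smallest singular value
`σ_min(A)` is the square root of the smallest eigenvalue of `AᵀA`. -/
theorem stmt1 {m n p : ℕ} (hmn : n ≤ m)
    (B : Matrix (Fin m) (Fin p) ℝ) (C : Matrix (Fin n) (Fin p) ℝ)
    (W : Matrix (Fin m) (Fin n) ℝ) (H : Matrix (Fin n) (Fin n) ℝ)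
    (hW : Wᵀ * W = 1) (hH : H.PosSemidef) (hpolar : B * Cᵀ = W * H)
    (hrank : (B * Cᵀ).rank = n)
    (hAA : ((B * Cᵀ)ᵀ * (B * Cᵀ)).IsHermitian)
    (Q : Matrix (Fin m) (Fin n) ℝ) (hQ : Qᵀ * Q = 1) :
    (∑ i, ∑ j, (B i j - (Q * C) i j) ^ 2) - (∑ i, ∑ j, (B i j - (W * C) i j) ^ 2)
      ≥ Real.sqrt (⨅ i, hAA.eigenvalues i) * ∑ i, ∑ j, (W i j - Q i j) ^ 2 :=
  stmt1_general B C W H hW hH hpolar hAA Q hQ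
end

section
/- For any two orthonormal matrices U, V ∈ V(r,n), ‖Uᵀ V − I‖_F² ≤ ‖U − V‖_F², where I is the r×r identity matrix. -/
open Matrix

lemma sumsq_eq_trace {m k : ℕ} (A : Matrix (Fin m) (Fin k) ℝ) :
    ∑ i, ∑ j, (A i j) ^ 2 = (Aᵀ * A).trace := by
  simp only [Matrix.trace, Matrix.diag, Matrix.mul_apply, Matrix.transpose_apply, sq]
  rw [Finset.sum_comm]

/-- For orthonormal `U, V ∈ V(r,n)`: `‖UᵀV − I‖_F² ≤ ‖U − V‖_F²`. -/
theorem stmt3 {n r : ℕ} (U V : Matrix (Fin n) (Fin r) ℝ)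
    (hU : Uᵀ * U = 1) (hV : Vᵀ * V = 1) :
    (∑ i, ∑ j, ((Uᵀ * V) i j - (1 : Matrix (Fin r) (Fin r) ℝ) i j) ^ 2)
      ≤ ∑ i, ∑ j, (U i j - V i j) ^ 2 := by
  set M : Matrix (Fin r) (Fin r) ℝ := Uᵀ * V with hM
  have e1 : (U - V)ᵀ * (U - V) = 1 + 1 - M - Mᵀ := by
    have : Mᵀ = Vᵀ * U := by rw [hM, transpose_mul, transpose_transpose]
    rw [transpose_sub, Matrix.sub_mul, Matrix.mul_sub, Matrix.mul_sub, hU, hV, hM, this]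
    abel
  have e2 : (M - 1)ᵀ * (M - 1) = Mᵀ * M - M - Mᵀ + 1 := by
    rw [transpose_sub, transpose_one, Matrix.sub_mul, Matrix.mul_sub, Matrix.mul_sub,
      Matrix.one_mul, Matrix.mul_one, Matrix.mul_one]
    abel
  have e3 : (V - U * M)ᵀ * (V - U * M) = 1 - Mᵀ * M := by
    have hVU : Vᵀ * U = Mᵀ := by rw [hM, transpose_mul, transpose_transpose]
    rw [transpose_sub, transpose_mul, Matrix.sub_mul, Matrix.mul_sub, Matrix.mul_sub, hV]
    rw [← Matrix.mul_assoc Vᵀ U M, hVU, Matrix.mul_assoc Mᵀ Uᵀ V, ← hM, Matrix.mul_assoc Mᵀ Uᵀ (U * M),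
      ← Matrix.mul_assoc Uᵀ U M, hU, Matrix.one_mul]
    abel
  have t1 : ∑ i, ∑ j, (U i j - V i j) ^ 2 = (1 + 1 - M - Mᵀ : Matrix (Fin r) (Fin r) ℝ).trace := by
    have := sumsq_eq_trace (U - V)
    simp only [Matrix.sub_apply] at this
    rw [this, e1]
  have t2 : (∑ i, ∑ j, (M i j - (1 : Matrix (Fin r) (Fin r) ℝ) i j) ^ 2)
      = (Mᵀ * M - M - Mᵀ + 1 : Matrix (Fin r) (Fin r) ℝ).trace := by
    have := sumsq_eq_trace (M - 1)
    simp only [Matrix.sub_apply] at this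
    rw [this, e2]
  have t3 : (0 : ℝ) ≤ (1 - Mᵀ * M : Matrix (Fin r) (Fin r) ℝ).trace := by
    rw [← e3, ← sumsq_eq_trace]
    exact Finset.sum_nonneg fun i _ => Finset.sum_nonneg fun j _ => sq_nonneg _
  rw [t1, t2]
  simp only [trace_sub, trace_add, trace_one] at t3 ⊢
  linarith
end

section
/- Every orthogonally decomposable tensor of rank exactly r has a unique orthogonal rank-r decomposition: if A = Σ_{j=1}^r λ_j u_j^{(1)} ⊗ … ⊗ u_j^{(k)} = Σ_{j=1}^r μ_j v_j^{(1)} ⊗ … ⊗ v_j^{(k)} with k ≥ 3, all λ_j, μ_j nonzero, and for each mode i the vectors u_1^{(i)},…,u_r^{(i)} (respectively v_1^{(i)},…,v_r^{(i)}) orthonormal, then there is a permutation σ of {1,…,r} and signs ε_j^{(i)} ∈ {±1} such that v_j^{(i)} = ε_j^{(i)} u_{σ(j)}^{(i)} and μ_j = (Π_i ε_j^{(i)}) λ_{σ(j)} for all i, j. -/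
open Finset

/-- Contraction of a sum of rank-one terms against a rank-one tensor. -/
lemma stmt9_contract {k r : ℕ} {n : Fin k → ℕ} (c : Fin r → ℝ)
    (p : (i : Fin k) → Fin r → Fin (n i) → ℝ)
    (w : (i : Fin k) → Fin (n i) → ℝ) :
    (∑ x : (i : Fin k) → Fin (n i), (∑ j, c j * ∏ i, p i j (x i)) * ∏ i, w i (x i))
      = ∑ j, c j * ∏ i, (∑ a, p i j a * w i a) :=
  calc (∑ x : (i : Fin k) → Fin (n i), (∑ j, c j * ∏ i, p i j (x i)) * ∏ i, w i (x i))
      = ∑ x : (i : Fin k) → Fin (n i), ∑ j, c j * ∏ i, (p i j (x i) * w i (x i)) := by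
        refine Finset.sum_congr rfl fun x _ => ?_
        rw [Finset.sum_mul]
        exact Finset.sum_congr rfl fun j _ => by
          rw [mul_assoc, ← Finset.prod_mul_distrib]
    _ = ∑ j, c j * ∑ x : (i : Fin k) → Fin (n i), ∏ i, (p i j (x i) * w i (x i)) := by
        rw [Finset.sum_comm]
        exact Finset.sum_congr rfl fun j _ => by rw [Finset.mul_sum]
    _ = ∑ j, c j * ∏ i, (∑ a, p i j a * w i a) :=
        Finset.sum_congr rfl fun j _ => by rw [Fintype.prod_sum]

/-- A product of a constant `if-then-else` over a nonempty finset. -/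
lemma stmt9_prod_ite_const {α : Type*} (s : Finset α) (hs : s.Nonempty)
    (c : Prop) [Decidable c] :
    (∏ _i ∈ s, (if c then (1:ℝ) else 0)) = if c then 1 else 0 := by
  by_cases h : c <;>
    simp [h, Finset.prod_const, zero_pow (Finset.card_ne_zero.mpr hs)]

/-- Splitting a product of an `if i = m` over all of `univ`. -/
lemma stmt9_prod_split {ι : Type*} [Fintype ι] [DecidableEq ι] (m : ι)
    (A : ℝ) (B : ι → ℝ) :
    (∏ i, (if i = m then A else B i)) = A * ∏ i ∈ Finset.univ.erase m, B i := by
  rw [← Finset.mul_prod_erase Finset.univ _ (Finset.mem_univ m), if_pos rfl]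
  congr 1
  exact Finset.prod_congr rfl fun i hi => if_neg (Finset.ne_of_mem_erase hi)

/-- The key per-pair algebraic analysis. -/
lemma stmt9_pair {k : ℕ} (hk : 3 ≤ k) (lam mu : ℝ) (hlam : lam ≠ 0) (hmu : mu ≠ 0)
    (a : Fin k → ℝ)
    (hI : ∀ m, lam * ∏ i ∈ Finset.univ.erase m, a i = mu * a m)
    (hII : ∀ m, lam * a m = mu * ∏ i ∈ Finset.univ.erase m, a i) :
    (∀ i, a i = 0) ∨ ((∀ i, a i = 1 ∨ a i = -1) ∧ mu = (∏ i, a i) * lam) := by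
  by_cases hz : ∀ i, a i = 0
  · exact Or.inl hz
  push_neg at hz; obtain ⟨m₀, hm₀⟩ := hz
  have hsq : lam ^ 2 = mu ^ 2 := by
    have e1 : lam ^ 2 * a m₀ = mu ^ 2 * a m₀ := by
      linear_combination lam * hII m₀ + mu * hI m₀
    exact mul_right_cancel₀ hm₀ e1
  have hmp : ∀ m : Fin k, a m * ∏ i ∈ Finset.univ.erase m, a i = ∏ i, a i :=
    fun m => Finset.mul_prod_erase Finset.univ a (Finset.mem_univ m)
  have ht : ∀ m, mu * a m ^ 2 = lam * ∏ i, a i := by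
    intro m
    linear_combination lam * hmp m - a m * hI m
  have hc_all : ∀ m, a m ^ 2 = a m₀ ^ 2 := fun m =>
    mul_left_cancel₀ hmu ((ht m).trans (ht m₀).symm)
  have hcpos : 0 < a m₀ ^ 2 :=
    lt_of_le_of_ne (sq_nonneg _) (Ne.symm (pow_ne_zero 2 hm₀))
  have htc : (∏ i, a i) ^ 2 = (a m₀ ^ 2) ^ k := by
    rw [← Finset.prod_pow, Finset.prod_congr rfl fun m _ => hc_all m,
      Finset.prod_const, Finset.card_univ, Fintype.card_fin]
  have hct : (a m₀ ^ 2) ^ 2 = (∏ i, a i) ^ 2 := by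
    have h1 := ht m₀
    have h2 : mu ^ 2 * (a m₀ ^ 2) ^ 2 = mu ^ 2 * (∏ i, a i) ^ 2 := by
      linear_combination (mu * a m₀ ^ 2 + lam * ∏ i, a i) * h1 + ((∏ i, a i) ^ 2) * hsq
    exact mul_left_cancel₀ (pow_ne_zero 2 hmu) h2
  have hc1 : a m₀ ^ 2 = 1 := by
    have hkk : (a m₀ ^ 2) ^ (k - 2) = 1 := by
      have h3 : (a m₀ ^ 2) ^ 2 * (a m₀ ^ 2) ^ (k - 2) = (a m₀ ^ 2) ^ 2 * 1 := by
        rw [mul_one, ← pow_add]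
        have h4 : 2 + (k - 2) = k := by omega
        rw [h4, ← htc, ← hct]
      exact mul_left_cancel₀ (pow_ne_zero 2 (ne_of_gt hcpos)) h3
    rcases lt_trichotomy (a m₀ ^ 2) 1 with h | h | h
    · exfalso
      have := pow_lt_one₀ (le_of_lt hcpos) h (by omega : k - 2 ≠ 0)
      rw [hkk] at this; exact lt_irrefl 1 this
    · exact h
    · exfalso
      have := one_lt_pow₀ h (by omega : k - 2 ≠ 0)
      rw [hkk] at this; exact lt_irrefl 1 this
  have hsigns : ∀ i, a i = 1 ∨ a i = -1 := by
    intro i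
    have h := (hc_all i).trans hc1
    exact mul_self_eq_one_iff.mp (by nlinarith [h])
  refine Or.inr ⟨hsigns, ?_⟩
  have h := ht m₀
  rw [hc1, mul_one] at h
  linear_combination h

/-- Two unit vectors with inner product `±1` are equal up to that sign. -/
lemma stmt9_vec {N : ℕ} (p q : Fin N → ℝ) (hp : ∑ b, p b * p b = 1)
    (hq : ∑ b, q b * q b = 1) (e : ℝ) (he : e = 1 ∨ e = -1)
    (hip : ∑ b, p b * q b = e) : ∀ b, q b = e * p b := by
  have he2 : e ^ 2 = 1 := by rcases he with h | h <;> rw [h] <;> norm_num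
  have hzero : ∑ b, (q b - e * p b) ^ 2 = 0 := by
    have h1 : ∀ b, (q b - e * p b) ^ 2
        = q b * q b - 2 * e * (p b * q b) + e ^ 2 * (p b * p b) := fun b => by ring
    rw [Finset.sum_congr rfl fun b _ => h1 b, Finset.sum_add_distrib,
      Finset.sum_sub_distrib, ← Finset.mul_sum, ← Finset.mul_sum, hp, hq, hip]
    nlinarith [he2]
  intro b
  have h2 := (Finset.sum_eq_zero_iff_of_nonneg (fun b _ => sq_nonneg _)).mp hzero b
    (Finset.mem_univ b)
  have h3 := pow_eq_zero_iff (n := 2) (by norm_num) |>.mp h2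
  linarith [h3]

/-- Uniqueness of orthogonal rank-`r` decompositions of tensors of order `k ≥ 3`:
two orthogonal decompositions with nonzero weights agree up to a permutation of the
summands and sign flips whose product over the modes is `+1`. -/
theorem stmt9 {k r : ℕ} (hk : 3 ≤ k) (n : Fin k → ℕ)
    (lam mu : Fin r → ℝ) (hlam : ∀ j, lam j ≠ 0) (hmu : ∀ j, mu j ≠ 0)
    (u v : (i : Fin k) → Fin r → Fin (n i) → ℝ)
    (hu : ∀ i j j', (∑ a, u i j a * u i j' a) = if j = j' then (1 : ℝ) else 0)
    (hv : ∀ i j j', (∑ a, v i j a * v i j' a) = if j = j' then (1 : ℝ) else 0)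
    (heq : ∀ x : (i : Fin k) → Fin (n i),
      (∑ j, lam j * ∏ i, u i j (x i)) = ∑ j, mu j * ∏ i, v i j (x i)) :
    ∃ σ : Equiv.Perm (Fin r), ∃ ε : Fin k → Fin r → ℝ,
      (∀ i j, ε i j = 1 ∨ ε i j = -1) ∧
      (∀ i j a, v i j a = ε i j * u i (σ j) a) ∧
      (∀ j, mu j = (∏ i, ε i j) * lam (σ j)) := by
  classical
  haveI : Nonempty (Fin k) := ⟨⟨0, by omega⟩⟩
  have key : ∀ w : (i : Fin k) → Fin (n i) → ℝ,
      (∑ j, lam j * ∏ i, (∑ b, u i j b * w i b))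
        = ∑ j, mu j * ∏ i, (∑ b, v i j b * w i b) := by
    intro w
    rw [← stmt9_contract lam u w, ← stmt9_contract mu v w]
    exact Finset.sum_congr rfl fun x _ => by rw [heq x]
  have herase : ∀ m : Fin k, (Finset.univ.erase m).Nonempty := by
    intro m
    rw [← Finset.card_pos, Finset.card_erase_of_mem (Finset.mem_univ m),
      Finset.card_univ, Fintype.card_fin]
    omega
  -- E1 : contraction against the full v rank-one tensor
  have hE1 : ∀ j', (∑ j, lam j * ∏ i, (∑ b, u i j b * v i j' b)) = mu j' := by
    intro j'
    have h := key (fun i => v i j')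
    simp only [hv, stmt9_prod_ite_const _ Finset.univ_nonempty, mul_ite, mul_one,
      mul_zero, Finset.sum_ite_eq', Finset.mem_univ, if_pos] at h
    exact h
  -- Identity I
  have hI : ∀ (m : Fin k) (j j' : Fin r),
      lam j * ∏ i ∈ Finset.univ.erase m, (∑ b, u i j b * v i j' b)
        = mu j' * (∑ b, u m j b * v m j' b) := by
    intro m j j'
    have h := key (fun i b => if i = m then u i j b else v i j' b)
    have hu' : ∀ (p : Fin r) (i : Fin k),
        (∑ b, u i p b * (if i = m then u i j b else v i j' b))
          = if i = m then (if p = j then (1:ℝ) else 0) else (∑ b, u i p b * v i j' b) := by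
      intro p i
      by_cases hi : i = m
      · subst hi; simp [hu]
      · simp [hi]
    have hv' : ∀ (q : Fin r) (i : Fin k),
        (∑ b, v i q b * (if i = m then u i j b else v i j' b))
          = if i = m then (∑ b, u m j b * v m q b) else (if q = j' then (1:ℝ) else 0) := by
      intro q i
      by_cases hi : i = m
      · subst hi; simp only [if_pos rfl]
        exact Finset.sum_congr rfl fun b _ => mul_comm _ _
      · simp [hi, hv]
    simp only [hu', hv'] at h
    simp only [stmt9_prod_split, stmt9_prod_ite_const _ (herase m),
      mul_ite, mul_one, mul_zero, ite_mul, zero_mul, one_mul,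
      Finset.sum_ite_eq', Finset.mem_univ, if_pos] at h
    rw [h]
  -- Identity II
  have hII : ∀ (m : Fin k) (j j' : Fin r),
      lam j * (∑ b, u m j b * v m j' b)
        = mu j' * ∏ i ∈ Finset.univ.erase m, (∑ b, u i j b * v i j' b) := by
    intro m j j'
    have h := key (fun i b => if i = m then v i j' b else u i j b)
    have hu' : ∀ (p : Fin r) (i : Fin k),
        (∑ b, u i p b * (if i = m then v i j' b else u i j b))
          = if i = m then (∑ b, u m p b * v m j' b) else (if p = j then (1:ℝ) else 0) := by
      intro p i
      by_cases hi : i = m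
      · subst hi; simp
      · simp [hi, hu]
    have hv' : ∀ (q : Fin r) (i : Fin k),
        (∑ b, v i q b * (if i = m then v i j' b else u i j b))
          = if i = m then (if q = j' then (1:ℝ) else 0) else (∑ b, u i j b * v i q b) := by
      intro q i
      by_cases hi : i = m
      · subst hi; simp [hv]
      · simp only [if_neg hi]
        exact Finset.sum_congr rfl fun b _ => mul_comm _ _
    simp only [hu', hv'] at h
    simp only [stmt9_prod_split, stmt9_prod_ite_const _ (herase m),
      mul_ite, mul_one, mul_zero, ite_mul, zero_mul, one_mul,
      Finset.sum_ite_eq', Finset.mem_univ, if_pos] at h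
    rw [← h]
  -- per-pair dichotomy
  have hpair : ∀ j j' : Fin r,
      (∀ i, (∑ b, u i j b * v i j' b) = 0) ∨
      ((∀ i, (∑ b, u i j b * v i j' b) = 1 ∨ (∑ b, u i j b * v i j' b) = -1) ∧
        mu j' = (∏ i, ∑ b, u i j b * v i j' b) * lam j) := fun j j' =>
    stmt9_pair hk (lam j) (mu j') (hlam j) (hmu j')
      (fun i => ∑ b, u i j b * v i j' b) (fun m => hI m j j') (fun m => hII m j j')
  -- existence of a match for each j'
  have hmatch : ∀ j', ∃ j,
      (∀ i, (∑ b, u i j b * v i j' b) = 1 ∨ (∑ b, u i j b * v i j' b) = -1) ∧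
        mu j' = (∏ i, ∑ b, u i j b * v i j' b) * lam j := by
    intro j'
    have hex : ∃ j, ¬ (∀ i, (∑ b, u i j b * v i j' b) = 0) := by
      by_contra hc
      push_neg at hc
      apply hmu j'
      rw [← hE1 j']
      refine Finset.sum_eq_zero fun j _ => ?_
      rw [Finset.prod_eq_zero (Finset.mem_univ (⟨0, by omega⟩ : Fin k))
        (hc j ⟨0, by omega⟩), mul_zero]
    obtain ⟨j, hj⟩ := hex
    exact ⟨j, (hpair j j').resolve_left hj⟩
  choose f hf1 hf2 using hmatch
  -- vector recovery
  have hvec : ∀ j' i b, v i j' b = (∑ b', u i (f j') b' * v i j' b') * u i (f j') b := by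
    intro j' i
    refine stmt9_vec (u i (f j')) (v i j') ?_ ?_ _ (hf1 j' i) rfl
    · simpa using hu i (f j') (f j')
    · simpa using hv i j' j'
  -- injectivity
  have hinj : Function.Injective f := by
    intro j₁ j₂ hff
    by_contra hne
    set i0 : Fin k := ⟨0, by omega⟩ with hi0
    have h0 : (∑ b, v i0 j₁ b * v i0 j₂ b) = 0 := by rw [hv]; simp [hne]
    have hsum : (∑ b, v i0 j₁ b * v i0 j₂ b)
        = (∑ b', u i0 (f j₁) b' * v i0 j₁ b') * (∑ b', u i0 (f j₂) b' * v i0 j₂ b') := by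
      have h1 : ∀ b, v i0 j₁ b * v i0 j₂ b
          = ((∑ b', u i0 (f j₁) b' * v i0 j₁ b') * (∑ b', u i0 (f j₂) b' * v i0 j₂ b'))
            * (u i0 (f j₁) b * u i0 (f j₁) b) := by
        intro b
        rw [hvec j₁ i0 b, hvec j₂ i0 b, hff]
        ring
      rw [Finset.sum_congr rfl fun b _ => h1 b, ← Finset.mul_sum, hu]
      simp
    rw [h0] at hsum
    rcases hf1 j₁ i0 with h1 | h1 <;> rcases hf2 j₁ with _ <;>
      rcases hf1 j₂ i0 with h2 | h2 <;> rw [h1, h2] at hsum <;> norm_num at hsum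
  refine ⟨Equiv.ofBijective f (Finite.injective_iff_bijective.mp hinj),
    fun i j' => ∑ b, u i (f j') b * v i j' b, fun i j' => hf1 j' i,
    fun i j' b => hvec j' i b, fun j' => hf2 j'⟩
end

section
/- Let 𝕌 = (U^{(1)},…,U^{(k)}) with U^{(i)} ∈ V(r,n_i) be a KKT point of the rank-r orthogonal tensor approximation maximization problem, i.e., V^{(i)} Λ = U^{(i)} P_i for symmetric matrices P_i, where Λ = diag(λ₁,…,λ_r) with λ_j = A τ(x_j) and V^{(i)} has columns A τ_i(x_j). If λ_j = 0 for some fixed j, then the tuple (Û^{(1)},…,Û^{(k)}) obtained by deleting the j-th column of each U^{(i)} is a KKT point of the corresponding rank-(r−1) problem. -/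
open Matrix

section

variable {k r : ℕ} {n : Fin k → ℕ}

/-- `λ_j = A τ(x_j)`, the full contraction of `A` with the `j`-th columns. -/
noncomputable def lamVec (A : ((i : Fin k) → Fin (n i)) → ℝ)
    (U : (i : Fin k) → Matrix (Fin (n i)) (Fin (r + 1)) ℝ) (j : Fin (r + 1)) : ℝ :=
  ∑ x : (i : Fin k) → Fin (n i), A x * ∏ i, U i (x i) j

/-- `V⁽ⁱ⁾`, whose `j`-th column is `A τ_i(x_j)` (contraction over all modes except `i`). -/
noncomputable def contraMat (A : ((i : Fin k) → Fin (n i)) → ℝ)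
    (U : (i : Fin k) → Matrix (Fin (n i)) (Fin (r + 1)) ℝ) (i : Fin k) :
    Matrix (Fin (n i)) (Fin (r + 1)) ℝ :=
  fun a j => ∑ x : (i : Fin k) → Fin (n i),
    if x i = a then A x * ∏ t ∈ Finset.univ.erase i, U t (x t) j else 0

end

/-- KKT reduction: if `𝕌` is a KKT point of mLROTA(r+1) (`V⁽ⁱ⁾Λ = U⁽ⁱ⁾P_i` with `P_i`
symmetric) and `λ_{j₀} = 0`, then deleting the `j₀`-th column of every factor matrix
yields a KKT point of mLROTA(r). -/
theorem stmt12 (k r : ℕ) (n : Fin k → ℕ)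
    (A : ((i : Fin k) → Fin (n i)) → ℝ)
    (U : (i : Fin k) → Matrix (Fin (n i)) (Fin (r + 1)) ℝ)
    (hU : ∀ i, (U i)ᵀ * U i = 1)
    (P : Fin k → Matrix (Fin (r + 1)) (Fin (r + 1)) ℝ)
    (hP : ∀ i, (P i)ᵀ = P i)
    (hKKT : ∀ i, contraMat A U i * Matrix.diagonal (lamVec A U) = U i * P i)
    (j₀ : Fin (r + 1)) (hj : lamVec A U j₀ = 0) :
    (∀ i, ((U i).submatrix id j₀.succAbove)ᵀ * (U i).submatrix id j₀.succAbove = 1) ∧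
    ∃ P' : Fin k → Matrix (Fin r) (Fin r) ℝ,
      (∀ i, (P' i)ᵀ = P' i) ∧
      ∀ i, (contraMat A U i).submatrix id j₀.succAbove *
              Matrix.diagonal (fun j => lamVec A U (j₀.succAbove j))
            = (U i).submatrix id j₀.succAbove * P' i := by
  have hPeq : ∀ i, P i = (U i)ᵀ * (contraMat A U i * Matrix.diagonal (lamVec A U)) := by
    intro i
    rw [hKKT i, ← Matrix.mul_assoc, hU i, Matrix.one_mul]
  have hcol : ∀ i c, P i c j₀ = 0 := by
    intro i c
    rw [hPeq i, Matrix.mul_apply]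
    simp only [Matrix.mul_diagonal, hj, mul_zero, Finset.sum_const_zero]
  have hrow : ∀ i c, P i j₀ c = 0 := by
    intro i c
    have h := congrFun (congrFun (hP i) c) j₀
    simp only [Matrix.transpose_apply] at h
    rw [h]; exact hcol i c
  constructor
  · intro i
    ext a b
    have h1 := congrFun (congrFun (hU i) (j₀.succAbove a)) (j₀.succAbove b)
    simp only [Matrix.mul_apply, Matrix.transpose_apply, Matrix.submatrix_apply, id] at h1 ⊢
    rw [h1]
    simp [Matrix.one_apply, Fin.succAbove_right_inj]
  · refine ⟨fun i => (P i).submatrix j₀.succAbove j₀.succAbove, ?_, ?_⟩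
    · intro i
      ext a b
      have := congrFun (congrFun (hP i) (j₀.succAbove a)) (j₀.succAbove b)
      simpa using this
    · intro i
      ext a j
      have h1 := congrFun (congrFun (hKKT i) a) (j₀.succAbove j)
      rw [Matrix.mul_diagonal] at h1
      rw [Matrix.mul_apply] at h1
      simp only [Matrix.mul_diagonal, Matrix.submatrix_apply, id]
      rw [Matrix.mul_apply]
      simp only [Matrix.submatrix_apply, id]
      rw [h1, Fin.sum_univ_succAbove (fun c => U i a c * P i c (j₀.succAbove j)) j₀]
      rw [hrow i (j₀.succAbove j)]
      ring
end

section
/- If U_+ ∈ V(r,n) is the polar orthonormal factor of a full-rank matrix M ∈ ℝ^{n×r} (i.e., M = U_+ S with S symmetric positive definite) and σ_min(M) ≥ ε > 0, then for every U₀ ∈ V(r,n), ⟨M, U_+⟩ − ⟨M, U₀⟩ ≥ (ε/2)‖U_+ − U₀‖_F². -/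
/-!
Since `M = U₊S` with `S` symmetric, `MᵀM = S²`, and expanding `‖(U₊ - U₀)√S‖_F²` with
`U₊ᵀU₊ = U₀ᵀU₀ = 1` gives `tr((U₊ - U₀) S (U₊ - U₀)ᵀ) = 2(⟨M, U₊⟩ - ⟨M, U₀⟩)`.
Every eigenvalue `λ ≥ 0` of `S` has `λ²` in the spectrum of `MᵀM`, so `λ ≥ σ_min(M) ≥ ε`,
i.e. `ε • 1 ≤ S` in the Loewner order; conjugating by `U₊ - U₀` and taking traces finishes.
-/

open Matrix
open scoped MatrixOrder ComplexOrder

namespace Matrix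

variable {m n 𝕜 R : Type*} [Fintype m] [Fintype n]

lemma IsHermitian.le_sqrt_of_mem_spectrum [RCLike 𝕜] [DecidableEq n] {A : Matrix n n 𝕜}
    (hA : A.IsHermitian) {c : ℝ} (hc : c ≤ √(⨅ i, hA.eigenvalues i)) :
    ∀ μ ∈ spectrum ℝ A, c ≤ √μ := by
  rw [hA.spectrum_real_eq_range_eigenvalues]
  rintro - ⟨i, rfl⟩
  exact hc.trans (Real.sqrt_le_sqrt (ciInf_le (Finite.bddBelow_range _) i))

lemma PosSemidef.algebraMap_le_of_le_sqrt_spectrum_mul_self [RCLike 𝕜] [DecidableEq n]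
    {S : Matrix n n 𝕜} (hS : S.PosSemidef) {c : ℝ} (hc : ∀ μ ∈ spectrum ℝ (S * S), c ≤ √μ) :
    algebraMap ℝ _ c ≤ S := by
  rw [algebraMap_le_iff_le_spectrum hS.isHermitian.isSelfAdjoint]
  intro x hx
  have hsq : x ^ 2 ∈ spectrum ℝ (S * S) := sq S ▸ spectrum.pow_mem_pow S 2 hx
  simpa [Real.sqrt_sq (spectrum_nonneg_of_nonneg hS.nonneg hx)] using hc _ hsq

lemma transpose_mul_self_of_transpose_mul_self_eq_one [CommRing R] [DecidableEq n]
    {U : Matrix m n R} (hU : Uᵀ * U = 1) {S : Matrix n n R} (hS : Sᵀ = S) :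
    (U * S)ᵀ * (U * S) = S * S := by
  rw [transpose_mul, hS, Matrix.mul_assoc, ← Matrix.mul_assoc Uᵀ, hU, Matrix.one_mul]

lemma trace_sub_mul_mul_transpose_sub [CommRing R] [DecidableEq n] {U V : Matrix m n R}
    (hU : Uᵀ * U = 1) (hV : Vᵀ * V = 1) {S : Matrix n n R} (hS : Sᵀ = S) :
    trace ((U - V) * S * (U - V)ᵀ) = 2 * (trace ((U * S)ᵀ * U) - trace ((U * S)ᵀ * V)) := by
  have hcross : trace (Vᵀ * U * S) = trace (S * Uᵀ * V) := by
    rw [← trace_transpose]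
    simp only [transpose_mul, transpose_transpose, hS, Matrix.mul_assoc]
  rw [trace_mul_cycle, transpose_mul, hS, Matrix.mul_assoc S, hU, Matrix.mul_one]
  simp only [transpose_sub, Matrix.sub_mul, Matrix.mul_sub, hU, hV, trace_sub, hcross,
    Matrix.one_mul]
  rw [trace_mul_comm (Uᵀ * V) S, ← Matrix.mul_assoc]
  ring

lemma mul_sum_sq_le_trace_mul_mul_transpose [DecidableEq n] {S : Matrix n n ℝ} {c : ℝ}
    (hc : algebraMap ℝ (Matrix n n ℝ) c ≤ S) (D : Matrix m n ℝ) :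
    c * ∑ i, ∑ j, D i j ^ 2 ≤ trace (D * S * Dᵀ) := by
  have hpsd := ((le_iff.1 hc).mul_mul_conjTranspose_same D).trace_nonneg
  have hfrob : trace (D * Dᵀ) = ∑ i, ∑ j, D i j ^ 2 := by
    simp [trace, mul_apply, sq]
  rw [conjTranspose_eq_transpose_of_trivial, Matrix.mul_sub, Matrix.sub_mul, trace_sub,
    Algebra.algebraMap_eq_smul_one, Matrix.mul_smul, Matrix.mul_one, Matrix.smul_mul,
    trace_smul, hfrob, smul_eq_mul] at hpsd
  linarith

end Matrix

theorem stmt16_general {n r : ℕ} (M : Matrix (Fin n) (Fin r) ℝ)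
    (Uplus : Matrix (Fin n) (Fin r) ℝ) (hUplus : Uplusᵀ * Uplus = 1)
    (S : Matrix (Fin r) (Fin r) ℝ) (hS : S.PosDef)
    (hpolar : M = Uplus * S)
    (hAA : (Mᵀ * M).IsHermitian)
    (ε : ℝ)
    (hσ : ε ≤ Real.sqrt (⨅ i, hAA.eigenvalues i))
    (U₀ : Matrix (Fin n) (Fin r) ℝ) (hU₀ : U₀ᵀ * U₀ = 1) :
    Matrix.trace (Mᵀ * Uplus) - Matrix.trace (Mᵀ * U₀)
      ≥ ε / 2 * ∑ i, ∑ j, (Uplus i j - U₀ i j) ^ 2 := by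
  subst hpolar
  have hSt : Sᵀ = S := by simpa using hS.isHermitian.eq
  have hspec := hAA.le_sqrt_of_mem_spectrum hσ
  rw [transpose_mul_self_of_transpose_mul_self_eq_one hUplus hSt] at hspec
  have hεS := hS.posSemidef.algebraMap_le_of_le_sqrt_spectrum_mul_self hspec
  have := mul_sum_sq_le_trace_mul_mul_transpose hεS (Uplus - U₀)
  rw [trace_sub_mul_mul_transpose_sub hUplus hU₀ hSt] at this
  simp only [Matrix.sub_apply] at this
  linarith

/-- If `U₊` is the polar orthonormal factor of a full-rank `M` (`M = U₊S`, `S` symmetric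
positive definite) and `σ_min(M) ≥ ε > 0` (the smallest singular value being the square
root of the smallest eigenvalue of `MᵀM`), then for every `U₀ ∈ V(r,n)`,
`⟨M,U₊⟩ − ⟨M,U₀⟩ ≥ (ε/2)‖U₊ − U₀‖_F²`. -/
theorem stmt16 {n r : ℕ} (M : Matrix (Fin n) (Fin r) ℝ)
    (Uplus : Matrix (Fin n) (Fin r) ℝ) (hUplus : Uplusᵀ * Uplus = 1)
    (S : Matrix (Fin r) (Fin r) ℝ) (hS : S.PosDef)
    (hpolar : M = Uplus * S)
    (hAA : (Mᵀ * M).IsHermitian)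
    (ε : ℝ) (hε : 0 < ε)
    (hσ : ε ≤ Real.sqrt (⨅ i, hAA.eigenvalues i))
    (U₀ : Matrix (Fin n) (Fin r) ℝ) (hU₀ : U₀ᵀ * U₀ = 1) :
    Matrix.trace (Mᵀ * Uplus) - Matrix.trace (Mᵀ * U₀)
      ≥ ε / 2 * ∑ i, ∑ j, (Uplus i j - U₀ i j) ^ 2 :=
  stmt16_general M Uplus hUplus S hS hpolar hAA ε hσ U₀ hU₀
end
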